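/- arXiv:1509.04309 — 3 statements merged into one kernel-verified Lean document; each statement's English description precedes it below -/
import Mathlib

section
/- Let m ≥ n ≥ 1. The convex hull of the Stiefel manifold Q = {X ∈ ℝ^{m×n} : XᵀX = Iₙ} equals the unit spectral-norm ball, i.e., convexHull(Q) = {X ∈ ℝ^{m×n} : ‖X‖₂ ≤ 1}. -/
/-!
Let `T` be a contraction. The eigenvectors `vᵢ` of `T†T` form an orthonormal basis whose images
are pairwise orthogonal, so `T vᵢ = σᵢ uᵢ` with `σᵢ = ‖T vᵢ‖ ∈ [0, 1]` and `u` orthonormal, i.e.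
`T = ∑ σᵢ ⟪vᵢ, ·⟫ uᵢ`. The linear map `c ↦ ∑ cᵢ ⟪vᵢ, ·⟫ uᵢ` sends every sign vector `c ∈ {±1}ⁿ` to
an isometry, hence sends the cube `[-1, 1]ⁿ = convexHull {±1}ⁿ`, which contains `σ`, into the
convex hull of the isometries.
-/

open Matrix

/-- The spectral norm (largest singular value) of a real matrix, defined as the
operator norm of the induced linear map between Euclidean spaces. -/
noncomputable def matSpectralNorm {m n : ℕ} (A : Matrix (Fin m) (Fin n) ℝ) : ℝ :=
  ‖LinearMap.toContinuousLinearMap (Matrix.toEuclideanLin A)‖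

open Module InnerProductSpace

section

variable {𝕜 E F : Type*} [RCLike 𝕜] [NormedAddCommGroup E] [InnerProductSpace 𝕜 E]
  [NormedAddCommGroup F] [InnerProductSpace 𝕜 F]

theorem pairwise_inner_extend_zero_eq_zero {ι κ : Type*} {e : ι → κ} (he : e.Injective)
    {w : ι → F} (hw : Pairwise fun i j => ⟪w i, w j⟫_𝕜 = 0) :
    Pairwise fun a b => ⟪Function.extend e w 0 a, Function.extend e w 0 b⟫_𝕜 = 0 := by
  intro a b hab
  by_cases ha : ∃ i, e i = a
  · by_cases hb : ∃ j, e j = b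
    · obtain ⟨i, rfl⟩ := ha
      obtain ⟨j, rfl⟩ := hb
      rw [he.extend_apply, he.extend_apply]
      exact hw fun hij => hab (congrArg e hij)
    · simp [Function.extend_apply' _ _ _ hb]
  · simp [Function.extend_apply' _ _ _ ha]

theorem exists_orthonormal_smul_eq_of_pairwise_inner_eq_zero [FiniteDimensional 𝕜 F]
    {ι : Type*} [Fintype ι] {w : ι → F} (hw : Pairwise fun i j => ⟪w i, w j⟫_𝕜 = 0)
    (hcard : Fintype.card ι ≤ finrank 𝕜 F) :
    ∃ u : ι → F, Orthonormal 𝕜 u ∧ ∀ i, (‖w i‖ : 𝕜) • u i = w i := by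
  obtain ⟨e⟩ := Function.Embedding.nonempty_of_card_le (hcard.trans_eq (Fintype.card_fin _).symm)
  -- Padded by zeros to `Fin (finrank 𝕜 F)`, the orthogonal family `w` is only normalised by
  -- Gram–Schmidt, which completes it to an orthonormal basis.
  have hw' := pairwise_inner_extend_zero_eq_zero e.injective hw
  let b := gramSchmidtOrthonormalBasis (Fintype.card_fin _).symm (Function.extend e w 0)
  refine ⟨b ∘ e, b.orthonormal.comp e e.injective, fun i => ?_⟩
  rcases eq_or_ne (w i) 0 with hi | hi
  · simp [hi]
  · have hwi : Function.extend e w 0 (e i) = w i := e.injective.extend_apply _ _ _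
    rw [Function.comp_apply, gramSchmidtOrthonormalBasis_apply_of_orthogonal _ hw' (hwi ▸ hi),
      hwi, smul_smul, mul_inv_cancel₀ (by simpa using hi), one_smul]

theorem exists_orthonormalBasis_pairwise_inner_apply_eq_zero [FiniteDimensional 𝕜 E]
    [FiniteDimensional 𝕜 F] (T : E →ₗ[𝕜] F) :
    ∃ v : OrthonormalBasis (Fin (finrank 𝕜 E)) 𝕜 E,
      Pairwise fun i j => ⟪T (v i), T (v j)⟫_𝕜 = 0 := by
  have hS := T.isSymmetric_adjoint_comp_self
  refine ⟨hS.eigenvectorBasis rfl, fun i j hij => ?_⟩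
  dsimp only
  rw [← LinearMap.adjoint_inner_right, ← LinearMap.comp_apply, hS.apply_eigenvectorBasis,
    inner_smul_right, (hS.eigenvectorBasis rfl).orthonormal.inner_eq_zero hij, mul_zero]

theorem OrthonormalBasis.sum_rankOne_apply {ι : Type*} [Fintype ι] (v : OrthonormalBasis ι 𝕜 E)
    (T : E →L[𝕜] F) : ∑ i, rankOne 𝕜 (T (v i)) (v i) = T := by
  simp_rw [← InnerProductSpace.comp_rankOne, ← ContinuousLinearMap.comp_finsetSum,
    v.sum_rankOne_eq_id, T.comp_id]

theorem Orthonormal.norm_sum_smul_sq {ι : Type*} [Fintype ι] {u : ι → F} (hu : Orthonormal 𝕜 u)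
    (a : ι → 𝕜) : ‖∑ i, a i • u i‖ ^ 2 = ∑ i, ‖a i‖ ^ 2 := by
  rw [@norm_sq_eq_re_inner 𝕜, hu.inner_sum, map_sum]
  simp [RCLike.conj_mul]

theorem OrthonormalBasis.norm_sum_smul_rankOne_apply {ι : Type*} [Fintype ι]
    (v : OrthonormalBasis ι 𝕜 E) {u : ι → F} (hu : Orthonormal 𝕜 u) {c : ι → 𝕜}
    (hc : ∀ i, ‖c i‖ = 1) (x : E) : ‖(∑ i, c i • rankOne 𝕜 (u i) (v i)) x‖ = ‖x‖ := by
  have hx : (∑ i, c i • rankOne 𝕜 (u i) (v i)) x = ∑ i, (c i * ⟪v i, x⟫_𝕜) • u i := by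
    simp [smul_smul]
  rw [← sq_eq_sq₀ (norm_nonneg _) (norm_nonneg _), hx, hu.norm_sum_smul_sq,
    ← v.sum_sq_norm_inner_right]
  simp [hc]

theorem Matrix.conjTranspose_mul_self_eq_one_iff_norm_toEuclideanLin {m n : Type*} [Fintype m]
    [Fintype n] [DecidableEq m] [DecidableEq n] (A : Matrix m n 𝕜) :
    Aᴴ * A = 1 ↔ ∀ x, ‖A.toEuclideanLin x‖ = ‖x‖ := by
  have hinner (x y) : ⟪A.toEuclideanLin x, A.toEuclideanLin y⟫_𝕜 =
      ⟪x, (Aᴴ * A).toEuclideanLin y⟫_𝕜 := by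
    rw [← LinearMap.adjoint_inner_right, ← toEuclideanLin_conjTranspose_eq_adjoint]
    simp
  rw [LinearMap.norm_map_iff_inner_map_map]
  simp_rw [hinner]
  refine ⟨fun h x y => by simp [h], fun h => toEuclideanLin.injective ?_⟩
  ext1 y
  exact ext_inner_left 𝕜 fun x => by simpa using h x y

end

theorem convexHull_setOf_norm_map_eq_closedBall {E F : Type*} [NormedAddCommGroup E]
    [InnerProductSpace ℝ E] [FiniteDimensional ℝ E] [NormedAddCommGroup F]
    [InnerProductSpace ℝ F] [FiniteDimensional ℝ F] (h : finrank ℝ E ≤ finrank ℝ F) :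
    convexHull ℝ {T : E →L[ℝ] F | ∀ x, ‖T x‖ = ‖x‖} = Metric.closedBall 0 1 := by
  refine subset_antisymm (convexHull_min (fun T hT => ?_) (convex_closedBall 0 1)) fun T hT => ?_
  · exact mem_closedBall_zero_iff.2 (T.opNorm_le_bound zero_le_one fun x => by rw [hT, one_mul])
  obtain ⟨v, hv⟩ := exists_orthonormalBasis_pairwise_inner_apply_eq_zero (T : E →ₗ[ℝ] F)
  obtain ⟨u, hu, hTv⟩ := exists_orthonormal_smul_eq_of_pairwise_inner_eq_zero
    (w := fun i => T (v i)) hv (by simpa using h)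
  set Φ := Fintype.linearCombination ℝ fun i => rankOne ℝ (u i) (v i)
  have hΦ : Φ (fun i => ‖T (v i)‖) = T := by
    conv_rhs => rw [← v.sum_rankOne_apply T]
    rw [Fintype.linearCombination_apply]
    refine Finset.sum_congr rfl fun i _ => ?_
    conv_rhs => rw [← hTv i]
    simp
  have hσ : (fun i => ‖T (v i)‖) ∈ convexHull ℝ (Set.univ.pi fun _ => {-1, 1}) := by
    simp only [convexHull_pi, convexHull_pair, segment_eq_Icc (by norm_num : (-1 : ℝ) ≤ 1)]
    intro i _
    exact ⟨by linarith [norm_nonneg (T (v i))],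
      by simpa using T.le_of_opNorm_le (mem_closedBall_zero_iff.1 hT) (v i)⟩
  rw [← hΦ]
  refine convexHull_mono ?_ (Φ.image_convexHull _ ▸ Set.mem_image_of_mem Φ hσ)
  rintro _ ⟨ε, hε, rfl⟩
  exact v.norm_sum_smul_rankOne_apply hu fun i => by
    obtain h | h : ε i = -1 ∨ ε i = 1 := hε i trivial <;> simp [h]

theorem convexHull_stiefel_eq_spectralNorm_ball_general (m n : ℕ) (hmn : n ≤ m) :
    convexHull ℝ {X : Matrix (Fin m) (Fin n) ℝ | Xᵀ * X = 1} =
      {X : Matrix (Fin m) (Fin n) ℝ | matSpectralNorm X ≤ 1} := by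
  let L : Matrix (Fin m) (Fin n) ℝ ≃ₗ[ℝ]
      (EuclideanSpace ℝ (Fin n) →L[ℝ] EuclideanSpace ℝ (Fin m)) :=
    toEuclideanLin.trans LinearMap.toContinuousLinearMap
  have hQ : {X : Matrix (Fin m) (Fin n) ℝ | Xᵀ * X = 1} = L ⁻¹' {T | ∀ x, ‖T x‖ = ‖x‖} :=
    Set.ext fun X => X.conjTranspose_mul_self_eq_one_iff_norm_toEuclideanLin
  have hB : {X | matSpectralNorm X ≤ 1} = L ⁻¹' Metric.closedBall 0 1 := by
    ext X
    simp [matSpectralNorm, L]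
  rw [hQ, hB, ← convexHull_setOf_norm_map_eq_closedBall (by simpa), ← L.image_symm_eq_preimage,
    ← L.image_symm_eq_preimage]
  exact (L.symm.toLinearMap.image_convexHull _).symm

/-- The convex hull of the Stiefel manifold `{X ∈ ℝ^{m×n} : Xᵀ X = Iₙ}` (for `m ≥ n ≥ 1`)
is the unit spectral-norm ball. -/
theorem convexHull_stiefel_eq_spectralNorm_ball (m n : ℕ) (hn : 1 ≤ n) (hmn : n ≤ m) :
    convexHull ℝ {X : Matrix (Fin m) (Fin n) ℝ | Xᵀ * X = 1} =
      {X : Matrix (Fin m) (Fin n) ℝ | matSpectralNorm X ≤ 1} :=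
  convexHull_stiefel_eq_spectralNorm_ball_general m n hmn
end

section
/- Let A ∈ ℝ^{m×n}, λ > 0, and suppose A = U Σ Vᵀ is a singular value decomposition of A, where U ∈ ℝ^{m×m} and V ∈ ℝ^{n×n} are orthogonal matrices and Σ ∈ ℝ^{m×n} is a rectangular diagonal matrix whose diagonal entries form the nonnegative vector σ_A ∈ ℝ^{min(m,n)}. Let d = σ_A − λ·P_{ℓ1}(σ_A/λ) and let D ∈ ℝ^{m×n} be the rectangular diagonal matrix with diagonal d. Then X* = U D Vᵀ is the unique minimizer over X ∈ ℝ^{m×n} of the function (1/2)‖A − X‖_F² + λ‖X‖₂. -/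
open Matrix

/-- The Frobenius norm of a real matrix. -/
noncomputable def frobNorm {m n : ℕ} (A : Matrix (Fin m) (Fin n) ℝ) : ℝ :=
  Real.sqrt (∑ i, ∑ j, (A i j) ^ 2)

/-- The `m × n` rectangular diagonal matrix with diagonal vector `d ∈ ℝ^{min(m,n)}`. -/
def rectDiag {m n : ℕ} (d : Fin (min m n) → ℝ) : Matrix (Fin m) (Fin n) ℝ :=
  fun i j =>
    if h : (i : ℕ) = (j : ℕ) then
      d ⟨(i : ℕ), by have h1 := i.isLt; have h2 := j.isLt; omega⟩
    else 0

/-!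
The residual `A - X* = λ U diag(p) Vᵀ` is a subgradient of `λ ‖·‖₂` at `X*`. Its Frobenius
pairing with any `X` is `λ ∑ pᵢ (UᵀXV)ᵢᵢ ≤ λ ‖p‖₁ ‖X‖₂ ≤ λ ‖X‖₂`, while its pairing with `X*` is
`λ² ⟪σ/λ - p, p⟫`, which dominates `λ ‖X*‖₂ ≤ λ² ‖σ/λ - p‖_∞` by the variational inequality of the
projection onto the `ℓ₁` ball tested at signed unit vectors. Expanding `½ ‖A - X‖_F²` around `X*`
then leaves the strict surplus `½ ‖X - X*‖_F²`. Rectangular diagonals reduce to square ones by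
keeping the first `min m n` columns of `U` and `V`.
-/

open scoped Matrix.Norms.L2Operator InnerProductSpace

theorem half_norm_sub_sq_add_lt {E : Type*} [NormedAddCommGroup E] [InnerProductSpace ℝ E]
    {a x y : E} {hx hy : ℝ} (hy_le : ⟪a - x, y⟫_ℝ ≤ hy) (hx_ge : hx ≤ ⟪a - x, x⟫_ℝ)
    (hne : y ≠ x) :
    1 / 2 * ‖a - x‖ ^ 2 + hx < 1 / 2 * ‖a - y‖ ^ 2 + hy := by
  have hpos : 0 < ‖x - y‖ := norm_pos_iff.mpr (sub_ne_zero.mpr hne.symm)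
  rw [show a - y = (a - x) + (x - y) by abel, norm_add_sq_real, inner_sub_right]
  nlinarith

section L1Projection

variable {ι : Type*} [Fintype ι]

def IsL1BallProjection (v p : ι → ℝ) : Prop :=
  ∑ i, |p i| ≤ 1 ∧ ∀ q : ι → ℝ, ∑ i, |q i| ≤ 1 → ∑ i, (v i - p i) ^ 2 ≤ ∑ i, (v i - q i) ^ 2

theorem sum_abs_add_mul_sub_le_one {p q : ι → ℝ} (hp : ∑ i, |p i| ≤ 1) (hq : ∑ i, |q i| ≤ 1)
    {t : ℝ} (ht₀ : 0 ≤ t) (ht₁ : t ≤ 1) : ∑ i, |p i + t * (q i - p i)| ≤ 1 :=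
  calc ∑ i, |p i + t * (q i - p i)| ≤ ∑ i, ((1 - t) * |p i| + t * |q i|) := by
        gcongr with i
        calc |p i + t * (q i - p i)| = |(1 - t) * p i + t * q i| := by ring_nf
          _ ≤ |(1 - t) * p i| + |t * q i| := abs_add_le _ _
          _ = (1 - t) * |p i| + t * |q i| := by
            rw [abs_mul, abs_mul, abs_of_nonneg (sub_nonneg.mpr ht₁), abs_of_nonneg ht₀]
    _ = (1 - t) * ∑ i, |p i| + t * ∑ i, |q i| := by
        rw [Finset.sum_add_distrib, Finset.mul_sum, Finset.mul_sum]
    _ ≤ 1 := by nlinarith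

variable {v p : ι → ℝ}

theorem IsL1BallProjection.sum_mul_sub_nonpos (hp : IsL1BallProjection v p) {q : ι → ℝ}
    (hq : ∑ i, |q i| ≤ 1) : ∑ i, (v i - p i) * (q i - p i) ≤ 0 := by
  set c := ∑ i, (v i - p i) * (q i - p i)
  set s := ∑ i, (q i - p i) ^ 2
  have hsegment : ∀ t : ℝ, 0 ≤ t → t ≤ 1 → 2 * t * c ≤ t ^ 2 * s := by
    intro t ht₀ ht₁
    have h := hp.2 _ (sum_abs_add_mul_sub_le_one hp.1 hq ht₀ ht₁)
    have hexpand : ∑ i, (v i - (p i + t * (q i - p i))) ^ 2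
        = ∑ i, (v i - p i) ^ 2 - 2 * t * c + t ^ 2 * s := by
      simp only [c, s, Finset.mul_sum, ← Finset.sum_sub_distrib, ← Finset.sum_add_distrib]
      exact Finset.sum_congr rfl fun i _ => by ring
    linarith
  by_contra! hc
  -- the quadratic `t ↦ t ^ 2 * s - 2 * t * c` is negative at its minimiser `t = c / s`
  have hs : 2 * c ≤ s := by simpa using hsegment 1 zero_le_one le_rfl
  have hs_pos : 0 < s := by linarith
  have h := hsegment (c / s) (by positivity) (by rw [div_le_one hs_pos]; linarith)
  field_simp at h
  nlinarith

theorem IsL1BallProjection.abs_sub_le (hp : IsL1BallProjection v p) (k : ι) :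
    |v k - p k| ≤ ∑ i, (v i - p i) * p i := by
  classical
  set q : ι → ℝ := Pi.single k (SignType.sign (v k - p k) : ℝ)
  have hq : ∑ i, |q i| ≤ 1 := by
    cases h : SignType.sign (v k - p k) <;> simp [q, h, Pi.single_apply, apply_ite]
  have h := hp.sum_mul_sub_nonpos hq
  have hwq : ∑ i, (v i - p i) * q i = |v k - p k| := by
    simp [q, Pi.single_apply]
  simp only [mul_sub, Finset.sum_sub_distrib] at h
  linarith

theorem IsL1BallProjection.norm_sub_le (hp : IsL1BallProjection v p) :
    ‖v - p‖ ≤ ∑ i, (v i - p i) * p i := by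
  rcases isEmpty_or_nonempty ι with hι | hι
  · simp [Subsingleton.elim (v - p) 0]
  · exact (pi_norm_le_iff_of_nonempty _).mpr fun i => by simpa using hp.abs_sub_le i

end L1Projection

namespace Matrix

variable {m n k : Type*}

def flatten (X : Matrix m n ℝ) : EuclideanSpace ℝ (m × n) :=
  WithLp.toLp 2 fun ij => X ij.1 ij.2

theorem flatten_sub (X Y : Matrix m n ℝ) : flatten (X - Y) = flatten X - flatten Y := rfl

theorem flatten_injective : Function.Injective (flatten : Matrix m n ℝ → _) :=
  fun _ _ h => funext₂ fun i j => congrFun (congrArg WithLp.ofLp h) (i, j)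

theorem mul_submatrix_id_one {l : Type*} [Fintype k] [DecidableEq k] (U : Matrix m k ℝ)
    (f : l → k) : U * (1 : Matrix k k ℝ).submatrix id f = U.submatrix id f := by
  ext i j
  simp [mul_apply, one_apply]

theorem transpose_mul_self_submatrix {l : Type*} [Fintype m] [DecidableEq k] [DecidableEq l]
    {U : Matrix m k ℝ} {f : l → k} (hf : Function.Injective f) (hU : Uᵀ * U = 1) :
    (U.submatrix id f)ᵀ * U.submatrix id f = 1 := by
  rw [transpose_submatrix, ← submatrix_mul _ _ f id f Function.bijective_id, hU,
    submatrix_one _ hf]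

variable [Fintype m] [Fintype n] [Fintype k]

theorem inner_flatten (Y X : Matrix m n ℝ) : ⟪flatten Y, flatten X⟫_ℝ = trace (Yᵀ * X) := by
  simp only [flatten, PiLp.inner_apply, RCLike.inner_apply, conj_trivial, Fintype.sum_prod_type,
    trace, diag_apply, mul_apply, transpose_apply, mul_comm]
  exact Finset.sum_comm

theorem l2_opNorm_le_one_of_transpose_mul_self [DecidableEq k] {U : Matrix m k ℝ}
    (hU : Uᵀ * U = 1) : ‖U‖ ≤ 1 := by
  have h : ‖U‖ * ‖U‖ ≤ 1 := by
    rw [← l2_opNorm_conjTranspose_mul_self, conjTranspose_eq_transpose_of_trivial, hU,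
      ← diagonal_one, l2_opNorm_diagonal]
    simpa using pi_norm_const_le (1 : ℝ)
  nlinarith [norm_nonneg U]

theorem abs_apply_le_l2_opNorm [DecidableEq n] (M : Matrix m n ℝ) (i : m) (j : n) :
    |M i j| ≤ ‖M‖ := by
  have hcol := l2_opNorm_mulVec M (EuclideanSpace.single j 1)
  have hentry := PiLp.norm_apply_le
    ((EuclideanSpace.equiv m ℝ).symm (M *ᵥ EuclideanSpace.single j (1 : ℝ))) i
  simp only [PiLp.ofLp_single, mulVec_single, MulOpposite.op_one, one_smul,
    PiLp.continuousLinearEquiv_symm_apply, PiLp.norm_single, norm_one, mul_one, col_apply,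
    Real.norm_eq_abs] at hcol hentry
  exact hentry.trans hcol

section OrthonormalColumns

variable [DecidableEq k]

theorem trace_transpose_mul_diagonal_mul_transpose_mul (U : Matrix m k ℝ) (V : Matrix n k ℝ)
    (c : k → ℝ) (X : Matrix m n ℝ) :
    trace ((U * diagonal c * Vᵀ)ᵀ * X) = ∑ i, c i * (Uᵀ * X * V) i i := by
  rw [transpose_mul, transpose_mul, transpose_transpose, diagonal_transpose, Matrix.mul_assoc,
    trace_mul_comm, Matrix.mul_assoc, Matrix.mul_assoc, trace]
  simp [diagonal_mul, Matrix.mul_assoc]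

variable {U : Matrix m k ℝ} {V : Matrix n k ℝ}

theorem transpose_mul_mul_diagonal_mul_transpose_mul (hU : Uᵀ * U = 1) (hV : Vᵀ * V = 1)
    (c : k → ℝ) : Uᵀ * (U * diagonal c * Vᵀ) * V = diagonal c := by
  simp only [← Matrix.mul_assoc, hU, Matrix.one_mul]
  rw [Matrix.mul_assoc, hV, Matrix.mul_one]

variable [DecidableEq n]

theorem abs_transpose_mul_mul_apply_le [DecidableEq m] (hU : Uᵀ * U = 1) (hV : Vᵀ * V = 1)
    (X : Matrix m n ℝ) (i j : k) : |(Uᵀ * X * V) i j| ≤ ‖X‖ :=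
  calc |(Uᵀ * X * V) i j| ≤ ‖Uᵀ * X * V‖ := abs_apply_le_l2_opNorm _ i j
    _ ≤ ‖Uᵀ‖ * ‖X‖ * ‖V‖ := (l2_opNorm_mul _ _).trans (by gcongr; exact l2_opNorm_mul _ _)
    _ ≤ 1 * ‖X‖ * 1 := by
      rw [← conjTranspose_eq_transpose_of_trivial, l2_opNorm_conjTranspose]
      gcongr
      exacts [l2_opNorm_le_one_of_transpose_mul_self hU, l2_opNorm_le_one_of_transpose_mul_self hV]
    _ = ‖X‖ := by ring

theorem l2_opNorm_mul_diagonal_mul_transpose_le (hU : Uᵀ * U = 1)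
    (hV : Vᵀ * V = 1) (c : k → ℝ) : ‖U * diagonal c * Vᵀ‖ ≤ ‖c‖ :=
  calc ‖U * diagonal c * Vᵀ‖ ≤ ‖U‖ * ‖diagonal c‖ * ‖Vᵀ‖ :=
        (l2_opNorm_mul _ _).trans (by gcongr; exact l2_opNorm_mul _ _)
    _ ≤ 1 * ‖c‖ * 1 := by
      rw [← conjTranspose_eq_transpose_of_trivial, l2_opNorm_conjTranspose, l2_opNorm_diagonal]
      gcongr
      exacts [l2_opNorm_le_one_of_transpose_mul_self hU, l2_opNorm_le_one_of_transpose_mul_self hV]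
    _ = ‖c‖ := by ring

theorem sum_mul_transpose_mul_mul_apply_le [DecidableEq m] (hU : Uᵀ * U = 1)
    (hV : Vᵀ * V = 1) (c : k → ℝ) (X : Matrix m n ℝ) :
    ∑ i, c i * (Uᵀ * X * V) i i ≤ (∑ i, |c i|) * ‖X‖ := by
  rw [Finset.sum_mul]
  refine Finset.sum_le_sum fun i _ => ?_
  calc c i * (Uᵀ * X * V) i i ≤ |c i| * |(Uᵀ * X * V) i i| := by
        rw [← abs_mul]; exact le_abs_self _
    _ ≤ |c i| * ‖X‖ := by gcongr; exact abs_transpose_mul_mul_apply_le hU hV X i i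

theorem prox_l2_opNorm_of_orthonormal_columns [DecidableEq m] (hU : Uᵀ * U = 1)
    (hV : Vᵀ * V = 1) {lam : ℝ} (hlam : 0 < lam) {σ p : k → ℝ}
    (hp : IsL1BallProjection (fun i => σ i / lam) p) {X : Matrix m n ℝ}
    (hX : X ≠ U * diagonal (fun i => σ i - lam * p i) * Vᵀ) :
    1 / 2 * ‖flatten (U * diagonal σ * Vᵀ - U * diagonal (fun i => σ i - lam * p i) * Vᵀ)‖ ^ 2
        + lam * ‖U * diagonal (fun i => σ i - lam * p i) * Vᵀ‖
      < 1 / 2 * ‖flatten (U * diagonal σ * Vᵀ - X)‖ ^ 2 + lam * ‖X‖ := by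
  set G := U * diagonal p * Vᵀ
  have hres : U * diagonal σ * Vᵀ - U * diagonal (fun i => σ i - lam * p i) * Vᵀ = lam • G := by
    have hdiff : (fun i => σ i - (σ i - lam * p i)) = lam • p := by
      ext i
      simp only [Pi.smul_apply, smul_eq_mul]
      ring
    rw [← Matrix.sub_mul, ← Matrix.mul_sub, diagonal_sub, hdiff, diagonal_smul, Matrix.mul_smul,
      Matrix.smul_mul]
  have hinner (Y : Matrix m n ℝ) :
      ⟪flatten (lam • G), flatten Y⟫_ℝ = lam * ∑ i, p i * (Uᵀ * Y * V) i i := by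
    rw [inner_flatten, transpose_smul, smul_mul, trace_smul, smul_eq_mul,
      trace_transpose_mul_diagonal_mul_transpose_mul]
  set w := (fun i => σ i / lam) - p
  have hd : (fun i => σ i - lam * p i) = lam • w := by
    ext i
    simp only [w, Pi.smul_apply, Pi.sub_apply, smul_eq_mul]
    field_simp
  rw [flatten_sub, flatten_sub]
  refine half_norm_sub_sq_add_lt ?_ ?_ (flatten_injective.ne hX)
  · rw [← flatten_sub, hres, hinner]
    gcongr
    exact (sum_mul_transpose_mul_mul_apply_le hU hV p X).trans
      (mul_le_of_le_one_left (norm_nonneg _) hp.1)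
  · rw [← flatten_sub, hres, hinner, hd, transpose_mul_mul_diagonal_mul_transpose_mul hU hV]
    calc lam * ‖U * diagonal (lam • w) * Vᵀ‖ ≤ lam * ‖lam • w‖ := by
          gcongr; exact l2_opNorm_mul_diagonal_mul_transpose_le hU hV _
      _ = lam * (lam * ‖w‖) := by rw [norm_smul, Real.norm_of_nonneg hlam.le]
      _ ≤ lam * (lam * ∑ i, w i * p i) := by gcongr; exact hp.norm_sub_le
      _ = lam * ∑ i, p i * diagonal (lam • w) i i := by
          simp only [diagonal_apply_eq, Pi.smul_apply, smul_eq_mul, Finset.mul_sum]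
          exact Finset.sum_congr rfl fun i _ => by ring

end OrthonormalColumns

end Matrix

theorem frobNorm_eq_norm_flatten {m n : ℕ} (X : Matrix (Fin m) (Fin n) ℝ) :
    frobNorm X = ‖Matrix.flatten X‖ := by
  simp [frobNorm, Matrix.flatten, EuclideanSpace.norm_eq, Fintype.sum_prod_type]

theorem matSpectralNorm_eq_l2_opNorm {m n : ℕ} (X : Matrix (Fin m) (Fin n) ℝ) :
    matSpectralNorm X = ‖X‖ :=
  rfl

theorem rectDiag_eq_submatrix_one_mul_diagonal_mul {m n : ℕ} (d : Fin (min m n) → ℝ) :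
    rectDiag d = (1 : Matrix (Fin m) (Fin m) ℝ).submatrix id (Fin.castLE (min_le_left m n)) *
      diagonal d *
        ((1 : Matrix (Fin n) (Fin n) ℝ).submatrix id (Fin.castLE (min_le_right m n)))ᵀ := by
  ext a b
  rw [mul_apply]
  simp only [rectDiag, mul_diagonal, transpose_apply, submatrix_apply, id, one_apply,
    Fin.ext_iff, Fin.val_castLE, ite_mul, one_mul, zero_mul, mul_ite, mul_one, mul_zero]
  split_ifs with h
  · rw [Fintype.sum_eq_single ⟨a, by omega⟩
      fun x hx => if_neg fun hb => hx (Fin.ext (hb.symm.trans h.symm))]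
    simp [h]
  · exact (Finset.sum_eq_zero fun x _ => by split_ifs <;> first | rfl | omega).symm

theorem mul_rectDiag_mul_transpose {m n : ℕ} (U : Matrix (Fin m) (Fin m) ℝ)
    (V : Matrix (Fin n) (Fin n) ℝ) (d : Fin (min m n) → ℝ) :
    U * rectDiag d * Vᵀ = U.submatrix id (Fin.castLE (min_le_left m n)) * diagonal d *
      (V.submatrix id (Fin.castLE (min_le_right m n)))ᵀ := by
  rw [rectDiag_eq_submatrix_one_mul_diagonal_mul, ← mul_submatrix_id_one U,
    ← mul_submatrix_id_one V, transpose_mul]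
  simp only [Matrix.mul_assoc]

theorem prox_spectralNorm_general (m n : ℕ) (A : Matrix (Fin m) (Fin n) ℝ) (lam : ℝ) (hlam : 0 < lam)
    (U : Matrix (Fin m) (Fin m) ℝ) (V : Matrix (Fin n) (Fin n) ℝ)
    (hU : Uᵀ * U = 1) (hV : Vᵀ * V = 1)
    (σ : Fin (min m n) → ℝ)
    (hA : A = U * rectDiag σ * Vᵀ)
    (p : Fin (min m n) → ℝ)
    (hp_mem : ∑ i, |p i| ≤ 1)
    (hp_proj : ∀ q : Fin (min m n) → ℝ, ∑ i, |q i| ≤ 1 →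
      ∑ i, (σ i / lam - p i) ^ 2 ≤ ∑ i, (σ i / lam - q i) ^ 2) :
    ∀ X : Matrix (Fin m) (Fin n) ℝ,
      X ≠ U * rectDiag (fun i => σ i - lam * p i) * Vᵀ →
      (1 / 2) * frobNorm (A - U * rectDiag (fun i => σ i - lam * p i) * Vᵀ) ^ 2
          + lam * matSpectralNorm (U * rectDiag (fun i => σ i - lam * p i) * Vᵀ)
        < (1 / 2) * frobNorm (A - X) ^ 2 + lam * matSpectralNorm X := by
  intro X hX
  simp only [hA, mul_rectDiag_mul_transpose, frobNorm_eq_norm_flatten,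
    matSpectralNorm_eq_l2_opNorm] at hX ⊢
  exact prox_l2_opNorm_of_orthonormal_columns
    (transpose_mul_self_submatrix (Fin.castLE_injective _) hU)
    (transpose_mul_self_submatrix (Fin.castLE_injective _) hV) hlam ⟨hp_mem, hp_proj⟩ hX

/-- Let `A = U Σ Vᵀ` be an SVD of `A ∈ ℝ^{m×n}` with singular-value vector `σ`, let `λ > 0`,
and let `p` be the Euclidean projection of `σ/λ` onto the unit `ℓ₁` ball. Then
`X* = U diag(σ - λ p) Vᵀ` is the unique minimizer of `X ↦ (1/2)‖A - X‖_F² + λ‖X‖₂`. -/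
theorem prox_spectralNorm (m n : ℕ) (A : Matrix (Fin m) (Fin n) ℝ) (lam : ℝ) (hlam : 0 < lam)
    (U : Matrix (Fin m) (Fin m) ℝ) (V : Matrix (Fin n) (Fin n) ℝ)
    (hU : Uᵀ * U = 1) (hV : Vᵀ * V = 1)
    (σ : Fin (min m n) → ℝ) (hσ : ∀ i, 0 ≤ σ i)
    (hA : A = U * rectDiag σ * Vᵀ)
    (p : Fin (min m n) → ℝ)
    (hp_mem : ∑ i, |p i| ≤ 1)
    (hp_proj : ∀ q : Fin (min m n) → ℝ, ∑ i, |q i| ≤ 1 →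
      ∑ i, (σ i / lam - p i) ^ 2 ≤ ∑ i, (σ i / lam - q i) ^ 2) :
    ∀ X : Matrix (Fin m) (Fin n) ℝ,
      X ≠ U * rectDiag (fun i => σ i - lam * p i) * Vᵀ →
      (1 / 2) * frobNorm (A - U * rectDiag (fun i => σ i - lam * p i) * Vᵀ) ^ 2
          + lam * matSpectralNorm (U * rectDiag (fun i => σ i - lam * p i) * Vᵀ)
        < (1 / 2) * frobNorm (A - X) ^ 2 + lam * matSpectralNorm X :=
  prox_spectralNorm_general m n A lam hlam U V hU hV σ hA p hp_mem hp_proj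
end

section
/- Let a ∈ ℝⁿ and λ > 0. The unique minimizer over x ∈ ℝⁿ of the function (1/2)‖a − x‖₂² + λ‖x‖_∞ is x* = a − λ·P_{ℓ1}(a/λ), where ‖x‖_∞ = maxᵢ |xᵢ| and ‖·‖₂ is the Euclidean norm. -/
/-!
The optimality of the projection `p` gives `∑ qᵢ x*ᵢ ≤ ∑ pᵢ x*ᵢ` for every `q` in the `ℓ₁` unit
ball, and `‖·‖_∞` is the support function of that ball, so `‖x*‖_∞ = ⟨p, x*⟩` while
`⟨p, y⟩ ≤ ‖y‖_∞` for all `y`: `p` is a subgradient of `‖·‖_∞` at `x*`. Since `a - x* = λ p`, this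
is the first-order condition for the `1`-strongly convex objective, which makes `x*` its unique
minimizer.
-/

/-- The `ℓ∞` norm of a vector in `ℝⁿ`, `‖x‖_∞ = maxᵢ |xᵢ|`. -/
noncomputable def linftyNorm {n : ℕ} (x : Fin n → ℝ) : ℝ :=
  sSup (Set.range fun i => |x i|)

open Finset

theorem real_inner_sub_nonpos_of_forall_norm_sub_le {F : Type*} [NormedAddCommGroup F]
    [InnerProductSpace ℝ F] {K : Set F} (hK : Convex ℝ K) {u v : F} (hv : v ∈ K)
    (hmin : ∀ w ∈ K, ‖u - v‖ ≤ ‖u - w‖) {w : F} (hw : w ∈ K) :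
    inner ℝ (u - v) (w - v) ≤ 0 := by
  have : Nonempty K := ⟨⟨v, hv⟩⟩
  refine (norm_eq_iInf_iff_real_inner_le_zero hK hv).1 (le_antisymm ?_ ?_) w hw
  · exact le_ciInf fun w => hmin w w.2
  · exact ciInf_le ⟨0, by rintro _ ⟨w, rfl⟩; positivity⟩ (⟨v, hv⟩ : K)

section

variable {ι : Type*} [Fintype ι]

theorem convex_sum_abs_le_one : Convex ℝ {q : ι → ℝ | ∑ i, |q i| ≤ 1} := by
  have : {q : ι → ℝ | ∑ i, |q i| ≤ 1} = WithLp.toLp 1 ⁻¹' Metric.closedBall 0 1 := by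
    ext q; simp [PiLp.norm_eq_of_L1]
  rw [this]
  exact (convex_closedBall _ _).linear_preimage (WithLp.linearEquiv 1 ℝ (ι → ℝ)).symm.toLinearMap

theorem sum_mul_sub_nonpos_of_forall_sum_sq_le {K : Set (ι → ℝ)} (hK : Convex ℝ K)
    {b p : ι → ℝ} (hp : p ∈ K) (hmin : ∀ q ∈ K, ∑ i, (b i - p i) ^ 2 ≤ ∑ i, (b i - q i) ^ 2)
    {q : ι → ℝ} (hq : q ∈ K) : ∑ i, (b i - p i) * (q i - p i) ≤ 0 := by
  let e := (WithLp.linearEquiv 2 ℝ (ι → ℝ)).symm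
  have hnorm : ∀ q, ‖e b - e q‖ = √(∑ i, (b i - q i) ^ 2) := fun q => by
    simp [e, EuclideanSpace.norm_eq, ← WithLp.toLp_sub]
  have := real_inner_sub_nonpos_of_forall_norm_sub_le (hK.linear_image e.toLinearMap)
    (Set.mem_image_of_mem e hp) (u := e b) ?_ (Set.mem_image_of_mem e hq)
  · simpa [e, PiLp.inner_apply, ← WithLp.toLp_sub, mul_comm] using this
  · rintro _ ⟨q, hq, rfl⟩
    simpa [hnorm] using Real.sqrt_le_sqrt (hmin q hq)

theorem half_sum_sq_add_lt_of_subgradient {g : (ι → ℝ) → ℝ} {a p x₀ : ι → ℝ} {lam : ℝ}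
    (hlam : 0 ≤ lam) (hg : ∀ y, g x₀ + ∑ i, p i * (y i - x₀ i) ≤ g y)
    (ha : ∀ i, a i - x₀ i = lam * p i) {x : ι → ℝ} (hx : x ≠ x₀) :
    (1 / 2) * ∑ i, (a i - x₀ i) ^ 2 + lam * g x₀ < (1 / 2) * ∑ i, (a i - x i) ^ 2 + lam * g x := by
  have hpos : 0 < ∑ i, (x i - x₀ i) ^ 2 := by
    obtain ⟨i, hi⟩ := Function.ne_iff.mp hx
    have := sub_ne_zero.mpr hi
    exact sum_pos' (fun j _ => sq_nonneg _) ⟨i, mem_univ i, by positivity⟩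
  have hexpand : ∑ i, (a i - x i) ^ 2
      = ∑ i, (a i - x₀ i) ^ 2 - 2 * lam * ∑ i, p i * (x i - x₀ i) + ∑ i, (x i - x₀ i) ^ 2 := by
    rw [mul_sum, ← sum_sub_distrib, ← sum_add_distrib]
    exact sum_congr rfl fun i _ => by linear_combination (-2 * (x i - x₀ i)) * ha i
  linarith [mul_le_mul_of_nonneg_left (hg x) hlam]

end

section linftyNorm

variable {n : ℕ}

theorem abs_le_linftyNorm (x : Fin n → ℝ) (i : Fin n) : |x i| ≤ linftyNorm x :=
  le_csSup (Set.finite_range _).bddAbove ⟨i, rfl⟩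

theorem linftyNorm_nonneg (x : Fin n → ℝ) : 0 ≤ linftyNorm x :=
  Real.sSup_nonneg (by rintro _ ⟨i, rfl⟩; exact abs_nonneg _)

theorem linftyNorm_le {x : Fin n → ℝ} {c : ℝ} (hc : 0 ≤ c) (h : ∀ i, |x i| ≤ c) :
    linftyNorm x ≤ c :=
  Real.sSup_le (by rintro _ ⟨i, rfl⟩; exact h i) hc

theorem sum_mul_le_linftyNorm {q : Fin n → ℝ} (hq : ∑ i, |q i| ≤ 1) (y : Fin n → ℝ) :
    ∑ i, q i * y i ≤ linftyNorm y :=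
  calc ∑ i, q i * y i ≤ ∑ i, |q i| * linftyNorm y :=
        sum_le_sum fun i _ => (le_abs_self _).trans <| by
          rw [abs_mul]; exact mul_le_mul_of_nonneg_left (abs_le_linftyNorm y i) (abs_nonneg _)
    _ = (∑ i, |q i|) * linftyNorm y := (sum_mul ..).symm
    _ ≤ linftyNorm y := mul_le_of_le_one_left (linftyNorm_nonneg y) hq

theorem linftyNorm_le_of_forall_sum_mul_le {y : Fin n → ℝ} {c : ℝ}
    (h : ∀ q : Fin n → ℝ, ∑ i, |q i| ≤ 1 → ∑ i, q i * y i ≤ c) : linftyNorm y ≤ c := by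
  have hsingle : ∀ i (s : ℝ), |s| ≤ 1 → s * y i ≤ c := fun i s hs => by
    have hq : ∑ j, |Pi.single i s j| ≤ 1 := by
      rwa [Fintype.sum_eq_single i fun j hj => by simp [hj], Pi.single_eq_same]
    simpa [Pi.single_apply] using h (Pi.single i s) hq
  refine linftyNorm_le (by simpa using h 0 (by simp)) fun i => abs_le'.2 ⟨?_, ?_⟩
  · simpa using hsingle i 1 (by simp)
  · simpa using hsingle i (-1) (by simp)

end linftyNorm

/-- For `a ∈ ℝⁿ` and `λ > 0`, the unique minimizer of `x ↦ (1/2)‖a - x‖₂² + λ‖x‖_∞` is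
`x* = a - λ · P_{ℓ₁}(a/λ)`, where `P_{ℓ₁}` is the Euclidean projection onto the unit
`ℓ₁`-norm ball. -/
theorem prox_linftyNorm (n : ℕ) (a : Fin n → ℝ) (lam : ℝ) (hlam : 0 < lam)
    (p : Fin n → ℝ)
    (hp_mem : ∑ i, |p i| ≤ 1)
    (hp_proj : ∀ q : Fin n → ℝ, ∑ i, |q i| ≤ 1 →
      ∑ i, (a i / lam - p i) ^ 2 ≤ ∑ i, (a i / lam - q i) ^ 2) :
    ∀ x : Fin n → ℝ, x ≠ (fun i => a i - lam * p i) →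
      (1 / 2) * (∑ i, (a i - (a i - lam * p i)) ^ 2)
          + lam * linftyNorm (fun i => a i - lam * p i)
        < (1 / 2) * (∑ i, (a i - x i) ^ 2) + lam * linftyNorm x := by
  intro x hx
  set x₀ : Fin n → ℝ := fun i => a i - lam * p i
  have hmax : ∀ q : Fin n → ℝ, ∑ i, |q i| ≤ 1 → ∑ i, q i * x₀ i ≤ ∑ i, p i * x₀ i := by
    intro q hq
    have hvar := sum_mul_sub_nonpos_of_forall_sum_sq_le convex_sum_abs_le_one hp_mem hp_proj hq
    have hscale : ∑ i, q i * x₀ i - ∑ i, p i * x₀ i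
        = lam * ∑ i, (a i / lam - p i) * (q i - p i) := by
      rw [← sum_sub_distrib, mul_sum]
      exact sum_congr rfl fun i _ => by field_simp; ring
    linarith [mul_nonpos_of_nonneg_of_nonpos hlam.le hvar]
  have hsub : ∀ y, linftyNorm x₀ + ∑ i, p i * (y i - x₀ i) ≤ linftyNorm y := by
    intro y
    simp only [mul_sub, sum_sub_distrib]
    linarith [sum_mul_le_linftyNorm hp_mem y, linftyNorm_le_of_forall_sum_mul_le hmax]
  exact half_sum_sq_add_lt_of_subgradient hlam.le hsub (fun i => by ring) hx
end
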